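/- For all β ≥ 0 and π ∈ (0,1], Δ(β, π) = (1+3β+β²)/(2(1+β)) + (1+β)(1-π)/π + 1/2 ≥ 1/π, with equality if and only if β = 0. -/

import Mathlib

/-!
The excess of the average AoI over its floor factors as
`Δ(β, π) - 1/π = β * ((2 + β) / (2 * (1 + β)) + (1 - π) / π)`,
and for `0 < π ≤ 1` the second factor is positive. Hence the excess is nonnegative and vanishes
exactly when `β = 0`.
-/

noncomputable def averageAoI (β π : ℝ) : ℝ :=
  (1 + 3 * β + β ^ 2) / (2 * (1 + β)) + (1 + β) * (1 - π) / π + 1 / 2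

lemma averageAoI_sub_floor {β π : ℝ} (hβ : 1 + β ≠ 0) (hπ : π ≠ 0) :
    averageAoI β π - 1 / π = β * ((2 + β) / (2 * (1 + β)) + (1 - π) / π) := by
  unfold averageAoI
  field_simp
  ring

lemma averageAoI_excess_factor_pos {β π : ℝ} (hβ : 0 ≤ β) (hπ0 : 0 < π) (hπ1 : π ≤ 1) :
    0 < (2 + β) / (2 * (1 + β)) + (1 - π) / π := by
  have hfirst : 0 < (2 + β) / (2 * (1 + β)) := by positivity
  have hsecond : 0 ≤ (1 - π) / π := div_nonneg (by linarith) hπ0.le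
  linarith

theorem aoi_floor (β π : ℝ) (hβ : 0 ≤ β) (hπ0 : 0 < π) (hπ1 : π ≤ 1) :
    1 / π ≤ (1 + 3 * β + β ^ 2) / (2 * (1 + β)) + (1 + β) * (1 - π) / π + 1 / 2 ∧
    ((1 + 3 * β + β ^ 2) / (2 * (1 + β)) + (1 + β) * (1 - π) / π + 1 / 2 = 1 / π ↔ β = 0) := by
  change 1 / π ≤ averageAoI β π ∧ (averageAoI β π = 1 / π ↔ β = 0)
  have hexcess := averageAoI_sub_floor (β := β) (by linarith) hπ0.ne'
  have hfactor := averageAoI_excess_factor_pos hβ hπ0 hπ1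
  refine ⟨sub_nonneg.mp (hexcess ▸ mul_nonneg hβ hfactor.le), ?_⟩
  rw [← sub_eq_zero, hexcess, mul_eq_zero, or_iff_left hfactor.ne']
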